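/- Let n ≥ 1 be an integer, γ and δ real numbers with n > δ + 1, let s₂ > 0, ρ ∈ (−1,1), r ∈ (−1,1), and set q = n s₂²/(2(1−ρ²)). Then ∫₀^∞ σ^{δ−n−1} exp(−q σ^{−2}) ₁F₁( (n−γ)/2; 3/2; (rρ)² q σ^{−2} ) dσ = 2^{(n−δ−2)/2} ((1−ρ²)/(n s₂²))^{(n−δ)/2} Γ((n−δ)/2) ₂F₁( (n−γ)/2, (n−δ)/2; 3/2; r²ρ² ). -/

import Mathlib

open MeasureTheory Real Set

/-- Pochhammer symbol (rising factorial) `(x)_m`. -/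
noncomputable def poch (x : ℝ) (m : ℕ) : ℝ := (ascPochhammer ℝ m).eval x

open Filter

lemma poch_zero (x : ℝ) : poch x 0 = 1 := by simp [poch]

lemma poch_succ (x : ℝ) (m : ℕ) : poch x (m + 1) = poch x m * (x + m) := by
  simp [poch, ascPochhammer_succ_eval]

lemma poch_pos {x : ℝ} (hx : 0 < x) (m : ℕ) : 0 < poch x m := by
  induction m with
  | zero => simp [poch_zero]
  | succ k ih => rw [poch_succ]; positivity

lemma Gamma_poch {x : ℝ} (hx : 0 < x) (m : ℕ) :
    Real.Gamma (x + m) = Real.Gamma x * poch x m := by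
  induction m with
  | zero => simp [poch_zero]
  | succ k ih =>
    have hxk : (0:ℝ) < x + k := by positivity
    have h : x + ((k : ℝ) + 1) = (x + k) + 1 := by ring
    rw [Nat.cast_add, Nat.cast_one, h, Real.Gamma_add_one hxk.ne', ih, poch_succ]
    ring

lemma point_eq {c q x : ℝ} (hx0 : 0 < x) :
    2⁻¹ * ((|(-2:ℝ)| * x ^ ((-2:ℝ) - 1)) •
      ((x ^ ((-2:ℝ))) ^ (c - 1) * Real.exp (-(q * x ^ ((-2:ℝ)))))) =
    x ^ (-(2 * c) - 1) * Real.exp (-q / x ^ 2) := by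
  have h1 : x ^ ((-2:ℝ)) = (x ^ 2)⁻¹ := by
    rw [show ((-2:ℝ)) = -((2:ℕ):ℝ) by norm_num, Real.rpow_neg hx0.le, Real.rpow_natCast]
  have e1 : (x ^ ((-2:ℝ))) ^ (c - 1) = x ^ ((-2) * (c - 1)) := (Real.rpow_mul hx0.le _ _).symm
  have e2 : x ^ ((-2:ℝ) - 1) = x ^ (-3:ℝ) := by norm_num
  have e3 : x ^ ((-3:ℝ)) * x ^ ((-2) * (c - 1)) = x ^ (-(2 * c) - 1) := by
    rw [← Real.rpow_add hx0]; congr 1; ring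
  have e4 : -(q * x ^ ((-2:ℝ))) = -q / x ^ 2 := by rw [h1]; ring
  rw [smul_eq_mul, e2, e1, e4, show |(-2:ℝ)| = 2 by norm_num, ← e3]
  ring

lemma intA_integrable {c q : ℝ} (hc : 0 < c) (hq : 0 < q) :
    IntegrableOn (fun σ : ℝ => σ ^ (-(2 * c) - 1) * Real.exp (-q / σ ^ 2)) (Ioi 0) := by
  have base : IntegrableOn (fun y : ℝ => y ^ (c - 1) * Real.exp (-(q * y))) (Ioi 0) := by
    have h := integrableOn_rpow_mul_exp_neg_mul_rpow (p := 1) (s := c - 1) (b := q)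
      (by linarith) one_pos hq
    refine h.congr_fun (fun x hx => ?_) measurableSet_Ioi
    simp only [Real.rpow_one, neg_mul]
  have h := (integrableOn_Ioi_comp_rpow_iff
    (fun y : ℝ => y ^ (c - 1) * Real.exp (-(q * y))) (p := (-2 : ℝ)) (by norm_num)).mpr base
  refine IntegrableOn.congr_fun ?_ (fun x hx => point_eq hx) measurableSet_Ioi
  exact h.const_mul (2⁻¹ : ℝ)

lemma intA {c q : ℝ} (hc : 0 < c) (hq : 0 < q) :
    ∫ σ in Ioi (0:ℝ), σ ^ (-(2 * c) - 1) * Real.exp (-q / σ ^ 2)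
      = (1 / 2) * q ^ (-c) * Real.Gamma c := by
  have key := integral_comp_rpow_Ioi
    (fun y : ℝ => y ^ (c - 1) * Real.exp (-(q * y))) (p := (-2:ℝ)) (by norm_num)
  rw [integral_rpow_mul_exp_neg_mul_Ioi hc hq] at key
  calc ∫ σ in Ioi (0:ℝ), σ ^ (-(2 * c) - 1) * Real.exp (-q / σ ^ 2)
      = ∫ x in Ioi (0:ℝ), 2⁻¹ * ((|(-2:ℝ)| * x ^ ((-2:ℝ) - 1)) •
          ((x ^ ((-2:ℝ))) ^ (c - 1) * Real.exp (-(q * x ^ ((-2:ℝ)))))) :=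
        setIntegral_congr_fun measurableSet_Ioi (fun x hx => (point_eq (c := c) (q := q) hx).symm)
    _ = 2⁻¹ * ((1 / q) ^ c * Real.Gamma c) := by rw [MeasureTheory.integral_const_mul, key]
    _ = (1 / 2) * q ^ (-c) * Real.Gamma c := by
        rw [one_div, Real.inv_rpow hq.le, ← Real.rpow_neg hq.le]; ring

lemma ratio_summable (a b z : ℝ) (hb : 0 < b) (hz0 : 0 ≤ z) (hz1 : z < 1) :
    Summable (fun m : ℕ =>
      poch a m * poch b m / (poch (3/2 : ℝ) m * (m.factorial : ℝ)) * z ^ m) := by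
  set g : ℕ → ℝ := fun m =>
    poch a m * poch b m / (poch (3/2 : ℝ) m * (m.factorial : ℝ)) * z ^ m with hg
  set l : ℝ := (1 + z) / 2 with hl
  have hl1 : l < 1 := by rw [hl]; linarith
  have hl0 : 0 ≤ l := by rw [hl]; linarith
  have hlz : 0 < l - z := by rw [hl]; linarith
  set A := |a| with hA
  have hA0 : 0 ≤ A := abs_nonneg a
  set M₀ : ℝ := (z * (A + b) + z * A * b + 1) / (l - z) with hM₀
  have hM0eq : (l - z) * M₀ = z * (A + b) + z * A * b + 1 := by
    rw [hM₀]; field_simp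
  obtain ⟨M, hM⟩ := exists_nat_ge (max 1 M₀)
  apply summable_of_ratio_norm_eventually_le hl1
  filter_upwards [eventually_ge_atTop M] with m hm
  have hμ1 : (1:ℝ) ≤ (m:ℝ) := le_trans (le_trans (le_max_left 1 M₀) hM) (Nat.cast_le.mpr hm)
  have hμM : M₀ ≤ (m:ℝ) := le_trans (le_trans (le_max_right 1 M₀) hM) (Nat.cast_le.mpr hm)
  have hμ0 : (0:ℝ) ≤ (m:ℝ) := by positivity
  have hbm : (0:ℝ) < b + m := by positivity
  have hcm : (0:ℝ) < 3/2 + (m:ℝ) := by positivity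
  have hm1 : (0:ℝ) < (m:ℝ) + 1 := by positivity
  have recur : g (m + 1) = g m * ((a + m) * ((b + m) * z) / ((3/2 + m) * ((m:ℝ) + 1))) := by
    have hp : poch (3/2:ℝ) m ≠ 0 := (poch_pos (by norm_num) m).ne'
    have hf : ((m.factorial : ℝ)) ≠ 0 := by positivity
    simp only [hg, poch_succ, Nat.factorial_succ, pow_succ, Nat.cast_mul, Nat.cast_add,
      Nat.cast_one]
    field_simp
  rw [recur, norm_mul, mul_comm l ‖g m‖]
  refine mul_le_mul_of_nonneg_left ?_ (norm_nonneg _)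
  rw [Real.norm_eq_abs, abs_div, abs_mul, abs_mul, abs_of_nonneg hz0,
    abs_of_pos hbm, abs_of_pos (by positivity : (0:ℝ) < (3/2 + (m:ℝ)) * ((m:ℝ) + 1))]
  rw [div_le_iff₀ (by positivity)]
  have habs : |a + (m:ℝ)| ≤ A + m := by
    calc |a + (m:ℝ)| ≤ |a| + |(m:ℝ)| := abs_add_le _ _
    _ = A + m := by rw [hA, abs_of_nonneg hμ0]
  have key : (z * (A + b) + z * A * b + 1) * (m:ℝ) ≤ (l - z) * ((m:ℝ) * (m:ℝ)) := by
    calc (z * (A + b) + z * A * b + 1) * (m:ℝ) = ((l - z) * M₀) * m := by rw [hM0eq]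
    _ = (l - z) * (M₀ * m) := by ring
    _ ≤ (l - z) * ((m:ℝ) * (m:ℝ)) := by
        exact mul_le_mul_of_nonneg_left (mul_le_mul_of_nonneg_right hμM hμ0) hlz.le
  nlinarith [mul_le_mul_of_nonneg_right habs (mul_nonneg hbm.le hz0),
    mul_nonneg (mul_nonneg hz0 hA0) hb.le, mul_nonneg hz0 (mul_nonneg hA0 hb.le)]

/-- Confluent hypergeometric function `₁F₁(a; c; z)`. -/
noncomputable def oneF1 (a c z : ℝ) : ℝ :=
  ∑' m : ℕ, poch a m / (poch c m * (m.factorial : ℝ)) * z ^ m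

/-- Gauss hypergeometric function `₂F₁(a, b; c; z)`. -/
noncomputable def twoF1 (a b c z : ℝ) : ℝ :=
  ∑' m : ℕ, poch a m * poch b m / (poch c m * (m.factorial : ℝ)) * z ^ m

/-- Generalized hypergeometric function `₃F₂(a₁, a₂, a₃; b₁, b₂; z)`. -/
noncomputable def threeF2 (a₁ a₂ a₃ b₁ b₂ z : ℝ) : ℝ :=
  ∑' m : ℕ, poch a₁ m * poch a₂ m * poch a₃ m /
      (poch b₁ m * poch b₂ m * (m.factorial : ℝ)) * z ^ m

/-- Beta function `B(u,v) = Γ(u)Γ(v)/Γ(u+v)`. -/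
noncomputable def betaFn (u v : ℝ) : ℝ := Real.Gamma u * Real.Gamma v / Real.Gamma (u + v)

/-- `W_{γ,δ}(n)`, the ratio of Gamma functions from the paper. -/
noncomputable def Wgd (γ δ : ℝ) (n : ℕ) : ℝ :=
  (Real.Gamma (((n : ℝ) - γ) / 2) * Real.Gamma (((n : ℝ) - δ) / 2)) /
    (Real.Gamma (((n : ℝ) - γ - 1) / 2) * Real.Gamma (((n : ℝ) - δ - 1) / 2))

/-- Step (iii), odd part: integrating `σ₂` out of the function `l(n, r | ρ, σ₂)`
(Gradshteyn & Ryzhik Eq. 7.621.4). -/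
theorem sigma2_integrated_out_odd (n : ℕ) (hn : 1 ≤ n) (γ δ : ℝ) (hδ : δ + 1 < (n : ℝ))
    (s2 : ℝ) (hs2 : 0 < s2) (ρ : ℝ) (hρ : ρ ∈ Ioo (-1 : ℝ) 1)
    (r : ℝ) (hr : r ∈ Ioo (-1 : ℝ) 1) (q : ℝ) (hq : q = (n : ℝ) * s2 ^ 2 / (2 * (1 - ρ ^ 2))) :
    (∫ σ in Ioi (0 : ℝ),
        σ ^ (δ - (n : ℝ) - 1) * Real.exp (-q / σ ^ 2) *
          oneF1 (((n : ℝ) - γ) / 2) (3 / 2) ((r * ρ) ^ 2 * q / σ ^ 2)) =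
      (2 : ℝ) ^ (((n : ℝ) - δ - 2) / 2) *
        ((1 - ρ ^ 2) / ((n : ℝ) * s2 ^ 2)) ^ (((n : ℝ) - δ) / 2) *
        Real.Gamma (((n : ℝ) - δ) / 2) *
        twoF1 (((n : ℝ) - γ) / 2) (((n : ℝ) - δ) / 2) (3 / 2) (r ^ 2 * ρ ^ 2) := by
  obtain ⟨hρ1, hρ2⟩ := hρ
  obtain ⟨hr1, hr2⟩ := hr
  have hρsq : ρ ^ 2 < 1 := by nlinarith
  have hrsq : r ^ 2 < 1 := by nlinarith
  have hρ2' : 0 < 1 - ρ ^ 2 := by linarith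
  have hn0 : (0:ℝ) < (n:ℝ) := by exact_mod_cast hn
  have hq0 : 0 < q := by rw [hq]; positivity
  set a : ℝ := ((n:ℝ) - γ) / 2 with hadef
  set b : ℝ := ((n:ℝ) - δ) / 2 with hbdef
  have hb : 0 < b := by rw [hbdef]; linarith
  set z : ℝ := r ^ 2 * ρ ^ 2 with hzdef
  have hz0 : 0 ≤ z := by rw [hzdef]; positivity
  have hz1 : z < 1 := by rw [hzdef]; nlinarith [sq_nonneg r, sq_nonneg ρ]
  set F : ℕ → ℝ → ℝ := fun m σ =>
    poch a m / (poch (3/2 : ℝ) m * (m.factorial : ℝ)) * z ^ m * q ^ m *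
      (σ ^ (-(2 * (b + (m:ℝ))) - 1) * Real.exp (-q / σ ^ 2)) with hF
  set g : ℕ → ℝ := fun m =>
    poch a m * poch b m / (poch (3/2 : ℝ) m * (m.factorial : ℝ)) * z ^ m with hgdef
  have hsum_g : Summable g := ratio_summable a b z hb hz0 hz1
  have hbm : ∀ m : ℕ, (0:ℝ) < b + (m:ℝ) := fun m => by positivity
  have hFint : ∀ m, IntegrableOn (F m) (Ioi 0) := fun m =>
    (intA_integrable (hbm m) hq0).const_mul _
  have h1 : ∀ m : ℕ, (q:ℝ) ^ m * q ^ (-(b + (m:ℝ))) = q ^ (-b) := by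
    intro m
    rw [← Real.rpow_natCast q m, ← Real.rpow_add hq0]
    congr 1; ring
  have hFval : ∀ m, (∫ σ in Ioi (0:ℝ), F m σ) = (1/2) * q ^ (-b) * Real.Gamma b * g m := by
    intro m
    simp only [hF]
    rw [MeasureTheory.integral_const_mul, intA (hbm m) hq0, Gamma_poch hb m]
    simp only [hgdef]
    linear_combination (poch a m / (poch (3/2 : ℝ) m * (m.factorial : ℝ)) * z ^ m *
      (1/2) * Real.Gamma b * poch b m) * h1 m
  have hFnorm : ∀ m, (∫ σ in Ioi (0:ℝ), ‖F m σ‖) =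
      (1/2) * q ^ (-b) * Real.Gamma b * |g m| := by
    intro m
    have hpt : ∀ σ ∈ Ioi (0:ℝ), ‖F m σ‖ =
        |poch a m / (poch (3/2 : ℝ) m * (m.factorial : ℝ))| * z ^ m * q ^ m *
          (σ ^ (-(2 * (b + (m:ℝ))) - 1) * Real.exp (-q / σ ^ 2)) := by
      intro σ hσ
      have hσ0 : (0:ℝ) < σ := hσ
      simp only [hF, Real.norm_eq_abs]
      rw [abs_mul, abs_mul, abs_mul, abs_of_nonneg (pow_nonneg hz0 m),
        abs_of_nonneg (pow_nonneg hq0.le m),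
        abs_of_nonneg
          (mul_nonneg (Real.rpow_nonneg hσ0.le _) (Real.exp_pos _).le)]
    rw [setIntegral_congr_fun measurableSet_Ioi hpt,
      MeasureTheory.integral_const_mul, intA (hbm m) hq0, Gamma_poch hb m]
    have habsg : |g m| =
        |poch a m / (poch (3/2 : ℝ) m * (m.factorial : ℝ))| * poch b m * z ^ m := by
      have hgm : g m =
          poch a m / (poch (3/2 : ℝ) m * (m.factorial : ℝ)) * poch b m * z ^ m := by
        simp only [hgdef]; ring
      rw [hgm, abs_mul, abs_mul, abs_of_pos (poch_pos hb m),
        abs_of_nonneg (pow_nonneg hz0 m)]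
    rw [habsg]
    linear_combination (|poch a m / (poch (3/2 : ℝ) m * (m.factorial : ℝ))| * z ^ m *
      (1/2) * Real.Gamma b * poch b m) * h1 m
  have hsum_norm : Summable (fun m => ∫ σ in Ioi (0:ℝ), ‖F m σ‖) :=
    ((hsum_g.abs).mul_left ((1/2) * q ^ (-b) * Real.Gamma b)).congr
      fun m => (hFnorm m).symm
  have hptw : ∀ σ ∈ Ioi (0:ℝ),
      σ ^ (δ - (n:ℝ) - 1) * Real.exp (-q / σ ^ 2) *
        oneF1 a (3/2) ((r * ρ) ^ 2 * q / σ ^ 2) = ∑' m, F m σ := by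
    intro σ hσ
    have hσ0 : (0:ℝ) < σ := hσ
    rw [oneF1, ← tsum_mul_left]
    refine tsum_congr fun m => ?_
    have hrρ : (r * ρ) ^ 2 = z := by rw [hzdef]; ring
    have e1 : σ ^ (-(2 * (b + (m:ℝ))) - 1) = σ ^ (δ - (n:ℝ) - 1) * (σ ^ (2 * m))⁻¹ := by
      have he : -(2 * (b + (m:ℝ))) - 1 = (δ - (n:ℝ) - 1) + (-((2 * m : ℕ) : ℝ)) := by
        simp only [hbdef]; push_cast; ring
      rw [he, Real.rpow_add hσ0, Real.rpow_neg hσ0.le, Real.rpow_natCast]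
    simp only [hF]
    rw [hrρ, div_pow, mul_pow, e1]
    ring
  rw [setIntegral_congr_fun measurableSet_Ioi hptw,
    ← MeasureTheory.integral_tsum_of_summable_integral_norm hFint hsum_norm,
    tsum_congr hFval, tsum_mul_left]
  have hcoef : (2:ℝ) ^ (((n:ℝ) - δ - 2) / 2) * ((1 - ρ ^ 2) / ((n:ℝ) * s2 ^ 2)) ^ b =
      (1/2) * q ^ (-b) := by
    have h2q : (1 - ρ ^ 2) / ((n:ℝ) * s2 ^ 2) = 2⁻¹ * q⁻¹ := by
      rw [hq]; field_simp
    rw [h2q, Real.mul_rpow (by norm_num) (by positivity),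
      Real.inv_rpow (by norm_num : (0:ℝ) ≤ 2), Real.inv_rpow hq0.le,
      ← Real.rpow_neg (by norm_num : (0:ℝ) ≤ 2), ← Real.rpow_neg hq0.le]
    have hexp : ((n:ℝ) - δ - 2) / 2 = b - 1 := by rw [hbdef]; ring
    rw [hexp]
    have h2 : (2:ℝ) ^ (b - 1) * (2:ℝ) ^ (-b) = 1/2 := by
      rw [← Real.rpow_add (by norm_num : (0:ℝ) < 2),
        show b - 1 + -b = (-1:ℝ) by ring, Real.rpow_neg_one]
      norm_num
    linear_combination q ^ (-b) * h2
  rw [twoF1, ← hgdef, ← hcoef]
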